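/- arXiv:2310.05019 — 6 statements merged into one kernel-verified Lean document; each statement's English description precedes it below -/
import Mathlib

section
/- If C : X×X → ℝ is L-Lipschitz, μ is a Borel probability measure on X, ε > 0, and h : X → ℝ is bounded and measurable, then the soft C-transform x ↦ T_μ(h)(x) = −ε log ∫_X exp((h(y) − C(x,y))/ε) dμ(y) is an L-Lipschitz function on X, i.e. |T_μ(h)(x₁) − T_μ(h)(x₂)| ≤ L·‖x₁ − x₂‖ for all x₁, x₂ ∈ X. -/
open MeasureTheory NNReal

/-- The soft `C`-transform: `T_μ(h)(x) = −ε·log ∫ exp((h(y) − C(x,y))/ε) dμ(y)`. -/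
noncomputable def softT {X : Type*} [MeasurableSpace X] (ε : ℝ) (C : X → X → ℝ)
    (μ : Measure X) (h : X → ℝ) : X → ℝ :=
  fun x => -ε * Real.log (∫ y, Real.exp ((h y - C x y) / ε) ∂μ)

/-- if `C : X×X → ℝ` is `L`-Lipschitz, `μ` is a Borel probability measure on the
compact set `X ⊆ ℝ^d`, `ε > 0`, and `h : X → ℝ` is bounded and measurable, then the soft
`C`-transform `T_μ(h)` is `L`-Lipschitz:
`|T_μ(h)(x₁) − T_μ(h)(x₂)| ≤ L·‖x₁ − x₂‖` for all `x₁, x₂ ∈ X`. -/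
theorem stmt3 {d : ℕ} (X : Set (EuclideanSpace ℝ (Fin d))) (hX : IsCompact X)
    (L : ℝ≥0) (C : X → X → ℝ) (hC : LipschitzWith L (Function.uncurry C))
    (ε : ℝ) (hε : 0 < ε) (μ : Measure X) [IsProbabilityMeasure μ]
    (h : X → ℝ) (hmeas : Measurable h) (hbdd : ∃ M : ℝ, ∀ y : X, |h y| ≤ M) :
    ∀ x₁ x₂ : X, |softT ε C μ h x₁ - softT ε C μ h x₂| ≤
      L * ‖(x₁ : EuclideanSpace ℝ (Fin d)) - (x₂ : EuclideanSpace ℝ (Fin d))‖ := by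
  obtain ⟨M, hM⟩ := hbdd
  haveI : CompactSpace X := isCompact_iff_compactSpace.mp hX
  -- bound on C
  obtain ⟨K, hK⟩ : ∃ K, ∀ p : X × X, |Function.uncurry C p| ≤ K := by
    obtain ⟨K, hK⟩ := isCompact_univ.exists_bound_of_continuousOn
      hC.continuous.continuousOn
    exact ⟨K, fun p => by simpa using hK p (Set.mem_univ p)⟩
  set f : X → ℝ := fun x => ∫ y, Real.exp ((h y - C x y) / ε) ∂μ with hf
  have hmeasC : ∀ x : X, Measurable fun y => C x y := fun x =>
    (hC.continuous.comp (Continuous.prodMk_right x)).measurable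
  have hint : ∀ x : X, Integrable (fun y => Real.exp ((h y - C x y) / ε)) μ := by
    intro x
    have hm : Measurable fun y => Real.exp ((h y - C x y) / ε) :=
      (((hmeas.sub (hmeasC x)).div_const ε).exp)
    refine ⟨hm.aestronglyMeasurable, ?_⟩
    refine HasFiniteIntegral.of_bounded (C := Real.exp ((M + K) / ε)) ?_
    filter_upwards with y
    rw [Real.norm_eq_abs, abs_of_pos (Real.exp_pos _)]
    apply Real.exp_le_exp.mpr
    apply div_le_div_of_nonneg_right _ hε.le
    have h1 := (abs_le.mp (hM y)).2
    have h2 := (abs_le.mp (hK (x, y))).1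
    simp only [Function.uncurry] at h2
    linarith
  have hf_pos : ∀ x : X, 0 < f x := by
    intro x
    have hlb : Real.exp ((-(M + K)) / ε) ≤ f x := by
      have := integral_mono (μ := μ)
        (integrable_const (Real.exp ((-(M + K)) / ε))) (hint x) ?_
      · simpa using this
      · intro y
        apply Real.exp_le_exp.mpr
        apply div_le_div_of_nonneg_right _ hε.le
        have h1 := (abs_le.mp (hM y)).1
        have h2 := (abs_le.mp (hK (x, y))).2
        simp only [Function.uncurry] at h2
        linarith
    exact lt_of_lt_of_le (Real.exp_pos _) hlb
  have key : ∀ x₁ x₂ : X, Real.log (f x₁) ≤ Real.log (f x₂) +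
      (L * ‖(x₁ : EuclideanSpace ℝ (Fin d)) - (x₂ : EuclideanSpace ℝ (Fin d))‖) / ε := by
    intro x₁ x₂
    set r : ℝ := ‖(x₁ : EuclideanSpace ℝ (Fin d)) - (x₂ : EuclideanSpace ℝ (Fin d))‖ with hr
    have hCd : ∀ y : X, C x₂ y - C x₁ y ≤ L * r := by
      intro y
      have := hC.dist_le_mul (x₁, y) (x₂, y)
      rw [Prod.dist_eq] at this
      simp only [dist_self, Function.uncurry] at this
      have hd : dist x₁ x₂ = r := by
        rw [Subtype.dist_eq, dist_eq_norm]
      rw [max_eq_left dist_nonneg, hd] at this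
      have habs : |C x₂ y - C x₁ y| ≤ L * r := by
        rw [← Real.dist_eq, dist_comm]; exact this
      linarith [(abs_le.mp habs).2]
    have hfle : f x₁ ≤ Real.exp ((L * r) / ε) * f x₂ := by
      rw [hf]
      rw [← integral_const_mul]
      apply integral_mono (hint x₁) ((hint x₂).const_mul _)
      intro y
      show Real.exp ((h y - C x₁ y) / ε) ≤ Real.exp (↑L * r / ε) * Real.exp ((h y - C x₂ y) / ε)
      rw [← Real.exp_add, Real.exp_le_exp, ← add_div]
      apply div_le_div_of_nonneg_right _ hε.le
      linarith [hCd y]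
    calc Real.log (f x₁) ≤ Real.log (Real.exp ((L * r) / ε) * f x₂) :=
          Real.log_le_log (hf_pos x₁) hfle
      _ = Real.log (f x₂) + (L * r) / ε := by
          rw [Real.log_mul (ne_of_gt (Real.exp_pos _)) (ne_of_gt (hf_pos x₂)),
            Real.log_exp]; ring
  intro x₁ x₂
  have k1 := key x₁ x₂
  have k2 := key x₂ x₁
  rw [norm_sub_rev] at k2
  have hsub : softT ε C μ h x₁ - softT ε C μ h x₂ =
      ε * (Real.log (f x₂) - Real.log (f x₁)) := by
    simp only [softT, hf]; ring
  have habs : |Real.log (f x₂) - Real.log (f x₁)| ≤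
      (L * ‖(x₁ : EuclideanSpace ℝ (Fin d)) - (x₂ : EuclideanSpace ℝ (Fin d))‖) / ε :=
    abs_sub_le_iff.mpr ⟨by linarith, by linarith⟩
  rw [hsub, abs_mul, abs_of_pos hε]
  calc ε * |Real.log (f x₂) - Real.log (f x₁)|
      ≤ ε * ((L * ‖(x₁ : EuclideanSpace ℝ (Fin d)) - (x₂ : EuclideanSpace ℝ (Fin d))‖) / ε) :=
        mul_le_mul_of_nonneg_left habs hε.le
    _ = L * ‖(x₁ : EuclideanSpace ℝ (Fin d)) - (x₂ : EuclideanSpace ℝ (Fin d))‖ := by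
        field_simp
end

section
/- Let f_t, g_t, f*, g* be bounded continuous functions on X, let β̂ be a Borel probability measure on X satisfying ∫_X exp((f*(x) + g*(y) − C(x,y))/ε) dβ̂(y) = 1 for every x ∈ X, and let η ∈ (0,1). Suppose sup_{x∈X}|f_t(x) − f*(x)| < δ and sup_{y∈X}|g_t(y) − g*(y)| < δ, and define f_{t+1} by exp(−f_{t+1}(x)/ε) = (1−η)·exp(−f_t(x)/ε) + η·∫_X exp((g_t(y) − C(x,y))/ε) dβ̂(y). Then sup_{x∈X}|f_{t+1}(x) − f*(x)| < δ. -/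
open MeasureTheory

/-- one `f`-update of online Sinkhorn does not increase the sup-distance to the
optimal potential. If `sup_x |f_t(x) − f*(x)| < δ`, `sup_y |g_t(y) − g*(y)| < δ`,
`∫ exp((f*(x)+g*(y)−C(x,y))/ε) dβ̂(y) = 1` for all `x`, and
`exp(−f_{t+1}(x)/ε) = (1−η)·exp(−f_t(x)/ε) + η·∫ exp((g_t(y)−C(x,y))/ε) dβ̂(y)`,
then `sup_x |f_{t+1}(x) − f*(x)| < δ`. -/
theorem stmt4 {d : ℕ} (X : Set (EuclideanSpace ℝ (Fin d))) (hX : IsCompact X)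
    [Nonempty ↥X] (C : X → X → ℝ) (hC : Continuous (Function.uncurry C))
    (ε : ℝ) (hε : 0 < ε) (δ : ℝ) (hδ : 0 < δ)
    (ft gt ftnext fstar gstar : X → ℝ)
    (hftc : Continuous ft) (hgtc : Continuous gt)
    (hfsc : Continuous fstar) (hgsc : Continuous gstar)
    (βhat : Measure X) [IsProbabilityMeasure βhat]
    (hnorm : ∀ x : X, ∫ y, Real.exp ((fstar x + gstar y - C x y) / ε) ∂βhat = 1)
    (η : ℝ) (hη0 : 0 < η) (hη1 : η < 1)
    (hfδ : (⨆ x : X, |ft x - fstar x|) < δ)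
    (hgδ : (⨆ y : X, |gt y - gstar y|) < δ)
    (hupd : ∀ x : X, Real.exp (-ftnext x / ε) =
      (1 - η) * Real.exp (-ft x / ε) + η * ∫ y, Real.exp ((gt y - C x y) / ε) ∂βhat) :
    (⨆ x : X, |ftnext x - fstar x|) < δ := by
  haveI : CompactSpace X := isCompact_iff_compactSpace.mp hX
  have hCx : ∀ x : X, Continuous (fun y : X => C x y) := fun x =>
    hC.comp (Continuous.prodMk_right x)
  have bddf : BddAbove (Set.range fun x : X => |ft x - fstar x|) :=
    (isCompact_range (by continuity)).bddAbove
  have bddg : BddAbove (Set.range fun y : X => |gt y - gstar y|) :=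
    (isCompact_range (by continuity)).bddAbove
  set M : ℝ := max (⨆ x : X, |ft x - fstar x|) (⨆ y : X, |gt y - gstar y|) with hMdef
  have hM : M < δ := max_lt hfδ hgδ
  have hfM : ∀ x : X, |ft x - fstar x| ≤ M := fun x =>
    (le_ciSup bddf x).trans (le_max_left _ _)
  have hgM : ∀ y : X, |gt y - gstar y| ≤ M := fun y =>
    (le_ciSup bddg y).trans (le_max_right _ _)
  -- integrability
  have hint : ∀ x : X, Integrable (fun y : X => Real.exp ((gstar y - C x y) / ε)) βhat :=
    fun x => Continuous.integrable_of_hasCompactSupport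
      (Real.continuous_exp.comp ((hgsc.sub (hCx x)).div_const ε))
      (HasCompactSupport.of_compactSpace _)
  have hintt : ∀ x : X, Integrable (fun y : X => Real.exp ((gt y - C x y) / ε)) βhat :=
    fun x => Continuous.integrable_of_hasCompactSupport
      (Real.continuous_exp.comp ((hgtc.sub (hCx x)).div_const ε))
      (HasCompactSupport.of_compactSpace _)
  -- the normalisation gives ∫ exp((g* y - C x y)/ε) = exp(-f* x/ε)
  have hker : ∀ x : X, ∫ y, Real.exp ((gstar y - C x y) / ε) ∂βhat
      = Real.exp (-fstar x / ε) := by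
    intro x
    have h1 : ∫ y, Real.exp (fstar x / ε) * Real.exp ((gstar y - C x y) / ε) ∂βhat = 1 := by
      have heq : ∀ y : X, Real.exp (fstar x / ε) * Real.exp ((gstar y - C x y) / ε)
          = Real.exp ((fstar x + gstar y - C x y) / ε) := by
        intro y
        rw [← Real.exp_add]
        congr 1
        ring
      simp_rw [heq]
      exact hnorm x
    rw [integral_const_mul] at h1
    have hne : Real.exp (fstar x / ε) ≠ 0 := Real.exp_ne_zero _
    have h2 : ∫ y, Real.exp ((gstar y - C x y) / ε) ∂βhat = (Real.exp (fstar x / ε))⁻¹ :=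
      eq_inv_of_mul_eq_one_right (by linarith [h1] : Real.exp (fstar x/ε) * _ = 1)
    rw [h2, ← Real.exp_neg]
    congr 1
    ring
  -- pointwise two-sided bound
  have key : ∀ x : X, |ftnext x - fstar x| ≤ M := by
    intro x
    -- upper bound
    have hub : Real.exp (-ftnext x / ε) ≤ Real.exp ((M - fstar x) / ε) := by
      rw [hupd x]
      have h1 : Real.exp (-ft x / ε) ≤ Real.exp ((M - fstar x) / ε) := by
        apply Real.exp_le_exp.mpr
        have := abs_le.mp (hfM x)
        gcongr
        linarith [this.1]
      have h2 : ∫ y, Real.exp ((gt y - C x y) / ε) ∂βhat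
          ≤ Real.exp ((M - fstar x) / ε) := by
        have hpt : ∀ y : X, Real.exp ((gt y - C x y) / ε)
            ≤ Real.exp (M / ε) * Real.exp ((gstar y - C x y) / ε) := by
          intro y
          rw [← Real.exp_add, ← add_div]
          apply Real.exp_le_exp.mpr
          have hab := abs_le.mp (hgM y)
          gcongr
          linarith [hab.2]
        calc ∫ y, Real.exp ((gt y - C x y) / ε) ∂βhat
            ≤ ∫ y, Real.exp (M / ε) * Real.exp ((gstar y - C x y) / ε) ∂βhat :=
              integral_mono (hintt x) ((hint x).const_mul _) hpt
          _ = Real.exp (M / ε) * Real.exp (-fstar x / ε) := by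
              rw [integral_const_mul, hker x]
          _ = Real.exp ((M - fstar x) / ε) := by
              rw [← Real.exp_add]; congr 1; ring
      nlinarith [Real.exp_pos (-ft x / ε), Real.exp_pos ((M - fstar x) / ε)]
    -- lower bound
    have hlb : Real.exp ((-M - fstar x) / ε) ≤ Real.exp (-ftnext x / ε) := by
      rw [hupd x]
      have h1 : Real.exp ((-M - fstar x) / ε) ≤ Real.exp (-ft x / ε) := by
        apply Real.exp_le_exp.mpr
        have := abs_le.mp (hfM x)
        gcongr
        linarith [this.2]
      have h2 : Real.exp ((-M - fstar x) / ε)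
          ≤ ∫ y, Real.exp ((gt y - C x y) / ε) ∂βhat := by
        have hpt : ∀ y : X, Real.exp (-M / ε) * Real.exp ((gstar y - C x y) / ε)
            ≤ Real.exp ((gt y - C x y) / ε) := by
          intro y
          rw [← Real.exp_add, ← add_div]
          apply Real.exp_le_exp.mpr
          have hab := abs_le.mp (hgM y)
          gcongr
          linarith [hab.1]
        calc Real.exp ((-M - fstar x) / ε)
            = Real.exp (-M / ε) * Real.exp (-fstar x / ε) := by
              rw [← Real.exp_add]; congr 1; ring
          _ = ∫ y, Real.exp (-M / ε) * Real.exp ((gstar y - C x y) / ε) ∂βhat := by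
              rw [integral_const_mul, hker x]
          _ ≤ ∫ y, Real.exp ((gt y - C x y) / ε) ∂βhat :=
              integral_mono ((hint x).const_mul _) (hintt x) hpt
      nlinarith [Real.exp_pos (-ft x / ε), Real.exp_pos ((-M - fstar x) / ε)]
    have hub' : -ftnext x / ε ≤ (M - fstar x) / ε := Real.exp_le_exp.mp hub
    have hlb' : (-M - fstar x) / ε ≤ -ftnext x / ε := Real.exp_le_exp.mp hlb
    rw [abs_le]
    constructor
    · have := (div_le_div_iff_of_pos_right hε).mp hub'
      linarith
    · have := (div_le_div_iff_of_pos_right hε).mp hlb'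
      linarith
  exact lt_of_le_of_lt (ciSup_le key) hM
end

section
/- Let y_1, y_2, … be i.i.d. random samples from the probability measure β on X, let f, g : X → ℝ be Lipschitz functions, and set φ_i(x) := exp((f(x) + g(y_i) − C(x,y_i))/ε) and φ(x) := ∫_X exp((f(x) + g(y) − C(x,y))/ε) dβ(y). Then sup_{x∈X} | (1/n)·Σ_{i=1}^n φ_i(x) − φ(x) | → 0 almost surely as n → ∞. -/
open MeasureTheory NNReal ProbabilityTheory

/-- Auxiliary uniform strong law of large numbers on an abstract compact metric space:
if `h : Z → Z → ℝ` is jointly continuous and `Y i` are i.i.d. with law `β`, then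
`sup_x |(1/n) Σ_{i<n} h x (Y i ω) − ∫ h x y ∂β| → 0` almost surely. -/
theorem uniform_slln_aux {Z : Type*} [MetricSpace Z] [CompactSpace Z] [Nonempty Z]
    [MeasurableSpace Z] [BorelSpace Z]
    (h : Z → Z → ℝ) (hHcont : Continuous (fun p : Z × Z => h p.1 p.2))
    (β : Measure Z) [IsProbabilityMeasure β]
    {Ω : Type*} [MeasurableSpace Ω] (P : Measure Ω) [IsProbabilityMeasure P]
    (Y : ℕ → Ω → Z) (hYmeas : ∀ i, Measurable (Y i))
    (hYlaw : ∀ i, P.map (Y i) = β)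
    (hYindep : iIndepFun Y P) :
    ∀ᵐ ω ∂P, Filter.Tendsto (fun n : ℕ => ⨆ x : Z,
        |(1 / (n : ℝ)) * ∑ i ∈ Finset.range n, h x (Y i ω) - ∫ y, h x y ∂β|)
      Filter.atTop (nhds 0) := by
  classical
  have hcont : ∀ x : Z, Continuous (h x) := fun x => hHcont.comp (Continuous.prodMk_right x)
  -- integrability w.r.t. β
  have hint : ∀ x : Z, Integrable (h x) β := fun x =>
    (hcont x).integrable_of_hasCompactSupport
      (IsCompact.of_isClosed_subset isCompact_univ (isClosed_tsupport _) (Set.subset_univ _))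
  -- strong law of large numbers at each fixed x
  have hSLLN : ∀ x : Z, ∀ᵐ ω ∂P, Filter.Tendsto
      (fun n : ℕ => (1 / (n : ℝ)) * ∑ i ∈ Finset.range n, h x (Y i ω))
      Filter.atTop (nhds (∫ y, h x y ∂β)) := by
    intro x
    have hZint : Integrable (fun ω => h x (Y 0 ω)) P := by
      have h1 : Integrable (h x) (P.map (Y 0)) := by rw [hYlaw 0]; exact hint x
      exact (integrable_map_measure (hcont x).aestronglyMeasurable
        (hYmeas 0).aemeasurable).mp h1
    have hindep : Pairwise (Function.onFun (IndepFun · · P) fun i ω => h x (Y i ω)) := by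
      intro i j hij
      exact (hYindep.indepFun hij).comp (hcont x).measurable (hcont x).measurable
    have hident : ∀ i, IdentDistrib (fun ω => h x (Y i ω)) (fun ω => h x (Y 0 ω)) P P := by
      intro i
      have hYid : IdentDistrib (Y i) (Y 0) P P :=
        ⟨(hYmeas i).aemeasurable, (hYmeas 0).aemeasurable, by rw [hYlaw i, hYlaw 0]⟩
      exact hYid.comp (hcont x).measurable
    have hmean : (∫ ω, h x (Y 0 ω) ∂P) = ∫ y, h x y ∂β := by
      rw [← hYlaw 0]
      exact (integral_map (hYmeas 0).aemeasurable (hcont x).aestronglyMeasurable).symm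
    have hsl := strong_law_ae (fun i ω => h x (Y i ω)) hZint hindep hident
    filter_upwards [hsl] with ω hω
    simpa [smul_eq_mul, one_div, hmean] using hω
  -- countable dense subset
  obtain ⟨D, hDct, hDdense⟩ := TopologicalSpace.exists_countable_dense Z
  have hAE : ∀ᵐ ω ∂P, ∀ x ∈ D, Filter.Tendsto
      (fun n : ℕ => (1 / (n : ℝ)) * ∑ i ∈ Finset.range n, h x (Y i ω))
      Filter.atTop (nhds (∫ y, h x y ∂β)) :=
    (ae_ball_iff hDct).mpr fun x _ => hSLLN x
  -- uniform continuity of the kernel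
  have hUC : UniformContinuous (fun p : Z × Z => h p.1 p.2) :=
    CompactSpace.uniformContinuous_of_continuous hHcont
  filter_upwards [hAE] with ω hω
  rw [Metric.tendsto_atTop]
  intro δ hδ
  have hδ4 : 0 < δ / 4 := by linarith
  -- modulus of continuity
  obtain ⟨r, hr, hmod⟩ := Metric.uniformContinuous_iff.mp hUC (δ / 4) hδ4
  have hr2 : 0 < r / 2 := by linarith
  have hkey : ∀ x x' : Z, dist x x' < r → ∀ y : Z, |h x y - h x' y| ≤ δ / 4 := by
    intro x x' hxx' y
    have hd : dist ((x, y) : Z × Z) (x', y) < r := by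
      rw [Prod.dist_eq]
      rw [dist_self]; exact max_lt hxx' hr
    have := hmod hd
    rw [Real.dist_eq] at this
    exact this.le
  -- finite net from compactness
  obtain ⟨t, ht⟩ := isCompact_univ.elim_finite_subcover
    (fun c : Z => Metric.ball c (r / 2)) (fun _ => Metric.isOpen_ball)
    (fun x _ => Set.mem_iUnion.2 ⟨x, Metric.mem_ball_self hr2⟩)
  -- replace net points by nearby points of D
  have hch : ∀ c : Z, ∃ p ∈ D, dist c p < r / 2 := fun c => hDdense.exists_dist_lt c hr2
  choose ch hchD hchdist using hch
  -- eventually, all net points are δ/4-close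
  have hev : ∀ᶠ n : ℕ in Filter.atTop, ∀ c ∈ t,
      |(1 / (n : ℝ)) * ∑ i ∈ Finset.range n, h (ch c) (Y i ω)
        - ∫ y, h (ch c) y ∂β| < δ / 4 := by
    rw [Filter.eventually_all_finset]
    intro c _
    have htend := hω (ch c) (hchD c)
    rw [Metric.tendsto_atTop] at htend
    obtain ⟨N, hN⟩ := htend (δ / 4) hδ4
    exact Filter.eventually_atTop.2 ⟨N, fun n hn => by
      have := hN n hn; rwa [Real.dist_eq] at this⟩
  rw [Filter.eventually_atTop] at hev
  obtain ⟨N, hN⟩ := hev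
  refine ⟨N, fun n hn => ?_⟩
  set S : Z → ℝ := fun x => (1 / (n : ℝ)) * ∑ i ∈ Finset.range n, h x (Y i ω) with hS
  set φ : Z → ℝ := fun x => ∫ y, h x y ∂β with hφ
  have hsup : (⨆ x : Z, |S x - φ x|) ≤ 3 * (δ / 4) := by
    apply ciSup_le
    intro x
    obtain ⟨c, hct, hxc⟩ : ∃ c ∈ t, x ∈ Metric.ball c (r / 2) := by
      have := ht (Set.mem_univ x)
      simpa using this
    have hxp : dist x (ch c) < r := by
      calc dist x (ch c) ≤ dist x c + dist c (ch c) := dist_triangle _ _ _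
        _ < r / 2 + r / 2 := add_lt_add (Metric.mem_ball.mp hxc) (hchdist c)
        _ = r := by ring
    have h1 : |S x - S (ch c)| ≤ δ / 4 := by
      have hdiff : S x - S (ch c)
          = (1 / (n : ℝ)) * ∑ i ∈ Finset.range n, (h x (Y i ω) - h (ch c) (Y i ω)) := by
        rw [hS]; rw [Finset.sum_sub_distrib]; ring
      rw [hdiff, abs_mul]
      have habs : |∑ i ∈ Finset.range n, (h x (Y i ω) - h (ch c) (Y i ω))|
          ≤ (n : ℝ) * (δ / 4) := by
        calc |∑ i ∈ Finset.range n, (h x (Y i ω) - h (ch c) (Y i ω))|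
            ≤ ∑ i ∈ Finset.range n, |h x (Y i ω) - h (ch c) (Y i ω)| :=
              Finset.abs_sum_le_sum_abs _ _
          _ ≤ ∑ _i ∈ Finset.range n, (δ / 4) :=
              Finset.sum_le_sum fun i _ => hkey x (ch c) hxp (Y i ω)
          _ = (n : ℝ) * (δ / 4) := by simp [mul_comm]
      rcases Nat.eq_zero_or_pos n with h0 | h0
      · simp [h0, hδ4.le]
      · have hn0 : (0 : ℝ) < (n : ℝ) := by exact_mod_cast h0
        calc |1 / (n : ℝ)| * |∑ i ∈ Finset.range n, (h x (Y i ω) - h (ch c) (Y i ω))|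
            ≤ (1 / (n : ℝ)) * ((n : ℝ) * (δ / 4)) := by
              rw [abs_of_pos (by positivity)]
              exact mul_le_mul_of_nonneg_left habs (by positivity)
          _ = δ / 4 := by field_simp
    have h3 : |φ (ch c) - φ x| ≤ δ / 4 := by
      have hdiff : φ (ch c) - φ x = ∫ y, (h (ch c) y - h x y) ∂β :=
        (integral_sub (hint (ch c)) (hint x)).symm
      rw [hdiff, ← Real.norm_eq_abs]
      calc ‖∫ y, (h (ch c) y - h x y) ∂β‖ ≤ (δ / 4) * (β Set.univ).toReal := by
            apply norm_integral_le_of_norm_le_const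
            filter_upwards with y
            rw [Real.norm_eq_abs, abs_sub_comm]
            exact hkey x (ch c) hxp y
        _ = δ / 4 := by simp
    have h2 : |S (ch c) - φ (ch c)| < δ / 4 := hN n hn c hct
    calc |S x - φ x| ≤ |S x - S (ch c)| + |S (ch c) - φ (ch c)| + |φ (ch c) - φ x| := by
          have ha := abs_sub_le (S x) (S (ch c)) (φ x)
          have hb := abs_sub_le (S (ch c)) (φ (ch c)) (φ x)
          linarith
      _ ≤ 3 * (δ / 4) := by linarith
  have hnonneg : 0 ≤ ⨆ x : Z, |S x - φ x| :=
    Real.iSup_nonneg fun x => abs_nonneg _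
  rw [Real.dist_eq, sub_zero, abs_of_nonneg hnonneg]
  calc (⨆ x : Z, |S x - φ x|) ≤ 3 * (δ / 4) := hsup
    _ < δ := by linarith

/-- uniform law of large numbers, almost sure: for i.i.d. samples
`y_1, y_2, …  ∼ β` and Lipschitz `f, g`, with `φ_i(x) = exp((f(x)+g(y_i)−C(x,y_i))/ε)` and
`φ(x) = ∫ exp((f(x)+g(y)−C(x,y))/ε) dβ(y)`,
`sup_x |(1/n)·Σ_{i=1}^n φ_i(x) − φ(x)| → 0` almost surely as `n → ∞`. -/
theorem stmt6 {d : ℕ} (X : Set (EuclideanSpace ℝ (Fin d))) (hX : IsCompact X) [Nonempty ↥X]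
    (L Lf Lg : ℝ≥0) (C : X → X → ℝ) (hC : LipschitzWith L (Function.uncurry C))
    (ε : ℝ) (hε : 0 < ε)
    (β : Measure X) [IsProbabilityMeasure β]
    {Ω : Type*} [MeasurableSpace Ω] (P : Measure Ω) [IsProbabilityMeasure P]
    (Y : ℕ → Ω → X) (hYmeas : ∀ i, Measurable (Y i))
    (hYlaw : ∀ i, P.map (Y i) = β)
    (hYindep : iIndepFun Y P)
    (f g : X → ℝ) (hf : LipschitzWith Lf f) (hg : LipschitzWith Lg g) :
    ∀ᵐ ω ∂P, Filter.Tendsto (fun n : ℕ => ⨆ x : X,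
        |(1 / (n : ℝ)) * ∑ i ∈ Finset.range n,
            Real.exp ((f x + g (Y i ω) - C x (Y i ω)) / ε)
          - ∫ y, Real.exp ((f x + g y - C x y) / ε) ∂β|)
      Filter.atTop (nhds 0) := by
  haveI : CompactSpace ↥X := isCompact_iff_compactSpace.mp hX
  have hCc : Continuous (fun p : ↥X × ↥X => C p.1 p.2) := hC.continuous
  have hfc : Continuous f := hf.continuous
  have hgc : Continuous g := hg.continuous
  have hH : Continuous
      (fun p : ↥X × ↥X => Real.exp ((f p.1 + g p.2 - C p.1 p.2) / ε)) := by fun_prop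
  exact uniform_slln_aux (fun x y => Real.exp ((f x + g y - C x y) / ε)) hH β P Y
    hYmeas hYlaw hYindep
end

section
/- Let 0 < κ < 1, −1 < b < 0, θ < −1, η_t := t^b, and let (a_t)_{t≥1} be a sequence of nonnegative reals satisfying a_{t+1} ≤ (1 − η_t + η_t·κ)·a_t + t^θ for all t ≥ 1. Then there exists a constant C > 0, depending only on κ, b and θ, such that for all t ≥ 1, a_{t+1} ≤ C·[ (a_1 + 1/(−θ−1))·exp( ((κ−1)/(b+1))·t^{b+1} ) + t^{θ−b} ]. -/
open Real Set

lemma myexp_chord {x : ℝ} (h0 : 0 ≤ x) (h1 : x ≤ 1) : Real.exp x ≤ 1 + 2*x := by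
  have h := convexOn_exp.2 (Set.mem_univ (0:ℝ)) (Set.mem_univ (1:ℝ))
    (by linarith : (0:ℝ) ≤ 1 - x) h0 (by ring)
  simp only [smul_eq_mul, mul_zero, mul_one, zero_add, Real.exp_zero] at h
  have he : Real.exp 1 < 2.7182818286 := Real.exp_one_lt_d9
  nlinarith

lemma mybern {u p : ℝ} (hu : 1 ≤ u) (hp0 : 0 ≤ p) (hp1 : p ≤ 1) :
    (u+1) ^ p ≤ u ^ p + p * u ^ (p-1) := by
  have hu0 : (0:ℝ) < u := by linarith
  have h1 : u + 1 = u * (1 + 1/u) := by field_simp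
  have h2 : (u * (1 + 1/u)) ^ p = u ^ p * (1 + 1/u) ^ p := by
    apply Real.mul_rpow hu0.le; positivity
  have h3 : (1 + 1/u) ^ p ≤ 1 + p * (1/u) := by
    have : (0:ℝ) < 1/u := by positivity
    exact rpow_one_add_le_one_add_mul_self (by linarith) hp0 hp1
  have h4 : u ^ (p-1) = u ^ p / u := by
    rw [Real.rpow_sub hu0, Real.rpow_one]
  have h5 : u ^ p * (1 + p * (1/u)) = u ^ p + p * (u ^ p / u) := by ring
  calc (u+1)^p = u ^ p * (1 + 1/u) ^ p := by rw [h1, h2]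
    _ ≤ u ^ p * (1 + p * (1/u)) := by
        apply mul_le_mul_of_nonneg_left h3 (Real.rpow_nonneg hu0.le p)
    _ = u ^ p + p * u ^ (p-1) := by rw [h5, h4]

lemma myprod (κ b : ℝ) (hκ1 : κ < 1) (hb1 : -1 < b) (hb0 : b < 0)
    {u : ℝ} (hu : 1 ≤ u) :
    (1 + (κ-1) * u ^ b) * Real.exp ((κ-1)/(b+1) * (u ^ (b+1) - 1)) ≤
      Real.exp ((κ-1)/(b+1) * ((u+1) ^ (b+1) - 1)) := by
  have hp0 : (0:ℝ) < b + 1 := by linarith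
  have hbern := mybern hu hp0.le (by linarith : b + 1 ≤ 1)
  have hb' : b + 1 - 1 = b := by ring
  rw [hb'] at hbern
  have hc : (κ-1)/(b+1) < 0 := div_neg_of_neg_of_pos (by linarith) hp0
  have hkey : (κ-1) * u ^ b + (κ-1)/(b+1) * (u ^ (b+1) - 1) ≤
      (κ-1)/(b+1) * ((u+1) ^ (b+1) - 1) := by
    have h1 : (κ-1)/(b+1) * ((u+1) ^ (b+1) - u ^ (b+1)) ≥
        (κ-1)/(b+1) * ((b+1) * u ^ b) := by
      apply mul_le_mul_of_nonpos_left _ hc.le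
      nlinarith
    have h2 : (κ-1)/(b+1) * ((b+1) * u ^ b) = (κ-1) * u ^ b := by
      field_simp
    nlinarith
  calc (1 + (κ-1) * u ^ b) * Real.exp ((κ-1)/(b+1) * (u ^ (b+1) - 1))
      ≤ Real.exp ((κ-1) * u ^ b) * Real.exp ((κ-1)/(b+1) * (u ^ (b+1) - 1)) := by
        apply mul_le_mul_of_nonneg_right _ (Real.exp_pos _).le
        have := Real.add_one_le_exp ((κ-1) * u ^ b)
        linarith
    _ = Real.exp ((κ-1) * u ^ b + (κ-1)/(b+1) * (u ^ (b+1) - 1)) := by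
        rw [← Real.exp_add]
    _ ≤ _ := by exact Real.exp_le_exp.2 hkey

set_option maxHeartbeats 1000000 in
lemma mystep (κ b θ C0 : ℝ) (hκ0 : 0 < κ) (hκ1 : κ < 1) (hb1 : -1 < b) (hb0 : b < 0)
    (hθ : θ < -1) (hC0 : 2/(1-κ) ≤ C0) {u : ℝ} (hu2 : 2 ≤ u) (huα : 2*(b-θ) ≤ u)
    (hup : 8*(b-θ)/(1-κ) ≤ u ^ (b+1)) :
    C0 * ((1 + (κ-1) * u ^ b) * (u-1) ^ (θ-b)) + u ^ θ ≤ C0 * u ^ (θ-b) := by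
  set α := b - θ with hα
  have hα0 : 0 < α := by linarith
  have h1κ : (0:ℝ) < 1 - κ := by linarith
  have hu0 : (0:ℝ) < u := by linarith
  have hu1 : (1:ℝ) ≤ u := by linarith
  have hiu0 : (0:ℝ) < 1/u := by positivity
  have hub1 : u ^ b ≤ 1 := Real.rpow_le_one_of_one_le_of_nonpos hu1 hb0.le
  have hub0 : (0:ℝ) < u ^ b := Real.rpow_pos_of_pos hu0 b
  have hρ1 : 1 + (κ-1) * u ^ b ≤ 1 := by nlinarith
  have hρ0 : 0 ≤ 1 + (κ-1) * u ^ b := by nlinarith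
  have hC0pos : 0 < C0 := lt_of_lt_of_le (by positivity) hC0
  have h1u : 1/u ≤ 1/2 := by
    rw [div_le_div_iff₀ hu0 (by norm_num)]; linarith
  have hv0 : (0:ℝ) < 1 - 1/u := by linarith
  have huv : u - 1 = u * (1 - 1/u) := by field_simp
  have hwle : (1 - 1/u)⁻¹ ≤ 1 + 2/u := by
    rw [← one_div, div_le_iff₀ hv0]
    have hu2' : 0 ≤ u - 2 := by linarith
    have : (1 + 2/u) * (1 - 1/u) - 1 = (u - 2)/u^2 := by field_simp; ring
    linarith [div_nonneg hu2' (by positivity : (0:ℝ) ≤ u^2)]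
  have hw1 : (1:ℝ) ≤ (1 - 1/u)⁻¹ := by
    rw [← one_div, one_le_div hv0]; linarith
  have hlogv : Real.log (1 - 1/u)⁻¹ ≤ 2/u := by
    have h1 := Real.log_le_sub_one_of_pos (show (0:ℝ) < (1 - 1/u)⁻¹ by positivity)
    linarith
  have hlogv0 : 0 ≤ Real.log (1 - 1/u)⁻¹ := Real.log_nonneg hw1
  have hx01 : Real.log (1 - 1/u)⁻¹ * α ≤ 1 := by
    have h5 : 2/u * α ≤ 1 := by
      rw [div_mul_eq_mul_div, div_le_one hu0]; linarith
    have h6 := mul_le_mul_of_nonneg_right hlogv hα0.le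
    linarith
  have hvpow : (1 - 1/u) ^ (θ-b) ≤ 1 + 4*α/u := by
    have e1 : (1 - 1/u) ^ (θ-b) = Real.exp (Real.log (1 - 1/u) * (θ-b)) :=
      Real.rpow_def_of_pos hv0 _
    have e2 : Real.log (1 - 1/u) * (θ-b) = Real.log (1 - 1/u)⁻¹ * α := by
      rw [Real.log_inv]; rw [hα]; ring
    have e3 := myexp_chord (x := Real.log (1 - 1/u)⁻¹ * α)
      (mul_nonneg hlogv0 hα0.le) hx01
    have e4 : 2 * (Real.log (1 - 1/u)⁻¹ * α) ≤ 4*α/u := by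
      have h6 := mul_le_mul_of_nonneg_right hlogv hα0.le
      have h7 : 4*α/u = 2 * (2/u * α) := by ring
      rw [h7]
      linarith
    rw [e1, e2]
    linarith
  have hw0 : (0:ℝ) < u ^ (θ-b) := Real.rpow_pos_of_pos hu0 _
  have hfrac : (u-1) ^ (θ-b) ≤ (1 + 4*α/u) * u ^ (θ-b) := by
    rw [huv, Real.mul_rpow hu0.le hv0.le]
    calc u ^ (θ-b) * (1 - 1/u) ^ (θ-b) ≤ u ^ (θ-b) * (1 + 4*α/u) :=
          mul_le_mul_of_nonneg_left hvpow hw0.le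
      _ = (1 + 4*α/u) * u ^ (θ-b) := by ring
  have hθsplit : u ^ θ = u ^ b * u ^ (θ-b) := by
    rw [← Real.rpow_add hu0]; ring_nf
  have hid : u ^ b * u = u ^ (b+1) := by
    rw [Real.rpow_add hu0, Real.rpow_one]
  have hf1 : 4*α/u ≤ (1-κ)/2 * u ^ b := by
    rw [div_le_iff₀ hu0]
    have h8 : 8*α ≤ (1-κ) * u ^ (b+1) := by
      rw [div_le_iff₀ h1κ] at hup
      linarith
    rw [mul_assoc, hid]
    linarith
  have hf2 : u ^ b ≤ C0 * ((1-κ)/2) * u ^ b := by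
    have h9 : (1:ℝ) ≤ C0 * ((1-κ)/2) := by
      rw [div_le_iff₀ h1κ] at hC0
      linarith
    have := mul_le_mul_of_nonneg_right h9 hub0.le
    linarith
  have hmain : C0 * ((1 + (κ-1) * u ^ b) * (1 + 4*α/u)) + u ^ b ≤ C0 := by
    have h40 : 0 ≤ 4*α/u := by positivity
    have hq : (1 + (κ-1) * u ^ b) * (1 + 4*α/u) ≤ 1 + (κ-1) * u ^ b + 4*α/u := by
      have := mul_le_mul_of_nonneg_right hρ1 h40
      nlinarith
    have hA := mul_le_mul_of_nonneg_left hq hC0pos.le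
    have hB := mul_le_mul_of_nonneg_left hf1 hC0pos.le
    linarith
  calc C0 * ((1 + (κ-1) * u ^ b) * (u-1) ^ (θ-b)) + u ^ θ
      ≤ C0 * ((1 + (κ-1) * u ^ b) * ((1 + 4*α/u) * u ^ (θ-b))) + u ^ b * u ^ (θ-b) := by
        rw [hθsplit]
        have h10 := mul_le_mul_of_nonneg_left hfrac hρ0
        have h11 := mul_le_mul_of_nonneg_left h10 hC0pos.le
        linarith
    _ = (C0 * ((1 + (κ-1) * u ^ b) * (1 + 4*α/u)) + u ^ b) * u ^ (θ-b) := by ring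
    _ ≤ C0 * u ^ (θ-b) := mul_le_mul_of_nonneg_right hmain hw0.le


set_option maxHeartbeats 1000000 in
/-- discrete Gronwall-type lemma: if `0 < κ < 1`, `−1 < b < 0`, `θ < −1`,
and a nonnegative real sequence `(a_t)` satisfies
`a_{t+1} ≤ (1 − t^b + t^b·κ)·a_t + t^θ` for all `t ≥ 1`, then there is a constant `C > 0`,
depending only on `κ, b, θ`, with
`a_{t+1} ≤ C·[(a_1 + 1/(−θ−1))·exp(((κ−1)/(b+1))·t^{b+1}) + t^{θ−b}]` for all `t ≥ 1`. -/
theorem stmt10 (κ b θ : ℝ) (hκ0 : 0 < κ) (hκ1 : κ < 1) (hb1 : -1 < b) (hb0 : b < 0)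
    (hθ : θ < -1) :
    ∃ C > 0, ∀ a : ℕ → ℝ, (∀ t, 0 ≤ a t) →
      (∀ t : ℕ, 1 ≤ t → a (t + 1) ≤ (1 - (t : ℝ) ^ b + (t : ℝ) ^ b * κ) * a t + (t : ℝ) ^ θ) →
      ∀ t : ℕ, 1 ≤ t →
        a (t + 1) ≤ C * ((a 1 + 1 / (-θ - 1)) * Real.exp ((κ - 1) / (b + 1) * (t : ℝ) ^ (b + 1))
          + (t : ℝ) ^ (θ - b)) := by
  have hp0 : (0:ℝ) < b + 1 := by linarith
  have h1κ : (0:ℝ) < 1 - κ := by linarith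
  have hα0 : (0:ℝ) < b - θ := by linarith
  have hθ1 : (0:ℝ) < -θ - 1 := by linarith
  set K : ℝ := 1/(-θ-1) with hK
  have hK0 : 0 < K := by rw [hK]; positivity
  set X : ℝ := 8*(b-θ)/(1-κ) with hXdef
  have hX0 : 0 < X := by rw [hXdef]; positivity
  set T0 : ℕ := 2 + ⌈2*(b-θ)⌉₊ + ⌈X^((1:ℝ)/(b+1))⌉₊ with hT0def
  have hT02 : (2:ℝ) ≤ (T0:ℝ) := by
    have : 2 ≤ T0 := by omega
    exact_mod_cast this
  have hT0α : 2*(b-θ) ≤ (T0:ℝ) := by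
    have h1 : (⌈2*(b-θ)⌉₊ : ℝ) ≤ (T0:ℝ) := by
      have : ⌈2*(b-θ)⌉₊ ≤ T0 := by omega
      exact_mod_cast this
    linarith [Nat.le_ceil (2*(b-θ))]
  have hT0X : X^((1:ℝ)/(b+1)) ≤ (T0:ℝ) := by
    have h1 : (⌈X^((1:ℝ)/(b+1))⌉₊ : ℝ) ≤ (T0:ℝ) := by
      have : ⌈X^((1:ℝ)/(b+1))⌉₊ ≤ T0 := by omega
      exact_mod_cast this
    linarith [Nat.le_ceil (X^((1:ℝ)/(b+1)))]
  set G : ℕ → ℝ := fun t => Real.exp ((κ-1)/(b+1) * (((t:ℝ)+1)^(b+1) - 1)) with hGdef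
  have hGpos : ∀ t : ℕ, 0 < G t := fun t => Real.exp_pos _
  have hc0 : (κ-1)/(b+1) < 0 := div_neg_of_neg_of_pos (by linarith) hp0
  have hGmono : ∀ s t : ℕ, s ≤ t → G t ≤ G s := by
    intro s t hst
    apply Real.exp_le_exp.2
    apply mul_le_mul_of_nonpos_left _ hc0.le
    have h1 : ((s:ℝ)+1) ≤ ((t:ℝ)+1) := by
      have : (s:ℝ) ≤ (t:ℝ) := by exact_mod_cast hst
      linarith
    have := Real.rpow_le_rpow (by positivity) h1 hp0.le
    linarith
  set C0 : ℝ := 2/(1-κ) + (1 + (T0:ℝ)/K)/(G T0) with hC0def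
  have hC0pos : 0 < C0 := by
    rw [hC0def]
    have h1 := hGpos T0
    have h2 : (0:ℝ) ≤ (T0:ℝ)/K := by positivity
    positivity
  have hC0ge : 2/(1-κ) ≤ C0 := by
    rw [hC0def]
    have h1 := hGpos T0
    have h2 : (0:ℝ) ≤ (T0:ℝ)/K := by positivity
    have : 0 ≤ (1 + (T0:ℝ)/K)/(G T0) := by positivity
    linarith
  have hC0G : 1 + (T0:ℝ)/K ≤ C0 * G T0 := by
    rw [hC0def, add_mul, div_mul_cancel₀ _ (hGpos T0).ne']
    have h1 := hGpos T0
    have : 0 ≤ 2/(1-κ) * G T0 := by positivity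
    linarith
  refine ⟨C0 * Real.exp ((1-κ)/(b+1)), by positivity, ?_⟩
  intro a ha hrec
  -- crude bound for small t
  have hsmall : ∀ t : ℕ, 1 ≤ t → a (t+1) ≤ a 1 + t := by
    intro t ht
    induction t, ht using Nat.le_induction with
    | base =>
      have h := hrec 1 le_rfl
      simp only [Nat.cast_one, Real.one_rpow] at h
      have h1 := ha 1
      push_cast
      nlinarith
    | succ t ht ih =>
      have h := hrec (t+1) (by omega)
      have hu1 : (1:ℝ) ≤ ((t:ℝ)+1) := by
        have : (0:ℝ) ≤ (t:ℝ) := Nat.cast_nonneg t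
        linarith
      push_cast at h ⊢
      have hub1 : ((t:ℝ)+1) ^ b ≤ 1 := Real.rpow_le_one_of_one_le_of_nonpos hu1 hb0.le
      have hub0 : (0:ℝ) < ((t:ℝ)+1) ^ b := Real.rpow_pos_of_pos (by linarith) b
      have hρ1 : 1 - ((t:ℝ)+1) ^ b + ((t:ℝ)+1) ^ b * κ ≤ 1 := by nlinarith
      have hρ0 : 0 ≤ 1 - ((t:ℝ)+1) ^ b + ((t:ℝ)+1) ^ b * κ := by nlinarith
      have hθ1' : ((t:ℝ)+1) ^ θ ≤ 1 :=
        Real.rpow_le_one_of_one_le_of_nonpos hu1 (by linarith)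
      have h2 : (1 - ((t:ℝ)+1) ^ b + ((t:ℝ)+1) ^ b * κ) * a (t+1) ≤ a (t+1) :=
        mul_le_of_le_one_left (ha _) hρ1
      linarith
  -- the bound for t ≤ T0
  have hsmallT : ∀ t : ℕ, 1 ≤ t → t ≤ T0 →
      a (t+1) ≤ C0 * ((a 1 + K) * G t + (t:ℝ)^(θ-b)) := by
    intro t ht htT0
    have h1 : a (t+1) ≤ a 1 + t := hsmall t ht
    have h2 : (t:ℝ) ≤ (T0:ℝ) := by exact_mod_cast htT0
    have ha1 := ha 1
    have h3 : a 1 + (t:ℝ) ≤ (1 + (T0:ℝ)/K) * (a 1 + K) := by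
      have hTK : ((T0:ℝ)/K) * K = (T0:ℝ) := div_mul_cancel₀ _ hK0.ne'
      have h4 : 0 ≤ ((T0:ℝ)/K) * a 1 := by positivity
      nlinarith
    have h5 : (1 + (T0:ℝ)/K) * (a 1 + K) ≤ (C0 * G T0) * (a 1 + K) :=
      mul_le_mul_of_nonneg_right hC0G (by linarith)
    have h6 : (C0 * G T0) * (a 1 + K) ≤ (C0 * G t) * (a 1 + K) := by
      apply mul_le_mul_of_nonneg_right _ (by linarith)
      exact mul_le_mul_of_nonneg_left (hGmono t T0 htT0) hC0pos.le
    have h7 : (0:ℝ) ≤ (t:ℝ)^(θ-b) := Real.rpow_nonneg (by positivity) _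
    have h8 : C0 * G t * (a 1 + K) = C0 * ((a 1 + K) * G t) := by ring
    have h9 : a (t+1) ≤ C0 * ((a 1 + K) * G t) := by
      rw [← h8]; exact h1.trans (h3.trans (h5.trans h6))
    have h10 : 0 ≤ C0 * (t:ℝ)^(θ-b) := mul_nonneg hC0pos.le h7
    calc a (t+1) ≤ C0 * ((a 1 + K) * G t) := h9
      _ ≤ C0 * ((a 1 + K) * G t + (t:ℝ)^(θ-b)) := by
          rw [mul_add]; exact le_add_of_nonneg_right h10
  have hclaim : ∀ t : ℕ, 1 ≤ t → a (t+1) ≤ C0 * ((a 1 + K) * G t + (t:ℝ)^(θ-b)) := by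
    intro t ht
    induction t, ht using Nat.le_induction with
    | base => exact hsmallT 1 le_rfl (by omega)
    | succ t ht ih =>
      by_cases hcase : t + 1 ≤ T0
      · exact hsmallT (t+1) (by omega) hcase
      · have htT0 : T0 ≤ t := by omega
        set u : ℝ := (t:ℝ) + 1 with hu
        have hTu : (T0:ℝ) ≤ u := by
          have : (T0:ℝ) ≤ (t:ℝ) := by exact_mod_cast htT0
          rw [hu]; linarith
        have hu1 : (1:ℝ) ≤ u := by
          have : (0:ℝ) ≤ (t:ℝ) := Nat.cast_nonneg t
          rw [hu]; linarith
        have hu2 : (2:ℝ) ≤ u := by linarith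
        have huα : 2*(b-θ) ≤ u := by linarith
        have hup : 8*(b-θ)/(1-κ) ≤ u ^ (b+1) := by
          have h1 : (X^((1:ℝ)/(b+1))) ^ (b+1) ≤ u ^ (b+1) :=
            Real.rpow_le_rpow (Real.rpow_nonneg hX0.le _) (by linarith) hp0.le
          have h2 : (X^((1:ℝ)/(b+1))) ^ (b+1) = X := by
            rw [← Real.rpow_mul hX0.le, one_div_mul_cancel hp0.ne', Real.rpow_one]
          rw [← hXdef]
          rw [h2] at h1
          exact h1
        have hrec' := hrec (t+1) (by omega)
        push_cast at hrec'
        rw [← hu] at hrec'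
        have hub1 : u ^ b ≤ 1 := Real.rpow_le_one_of_one_le_of_nonpos hu1 hb0.le
        have hub0 : (0:ℝ) < u ^ b := Real.rpow_pos_of_pos (by linarith) b
        have hρeq : 1 - u ^ b + u ^ b * κ = 1 + (κ-1) * u ^ b := by ring
        rw [hρeq] at hrec'
        have hρ0 : 0 ≤ 1 + (κ-1) * u ^ b := by nlinarith
        have hstep1 : (1 + (κ-1) * u ^ b) * a (t+1) ≤
            (1 + (κ-1) * u ^ b) * (C0 * ((a 1 + K) * G t + (t:ℝ)^(θ-b))) :=
          mul_le_mul_of_nonneg_left ih hρ0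
        -- product part
        have hGt : G t = Real.exp ((κ-1)/(b+1) * (u^(b+1) - 1)) := by
          rw [hGdef, hu]
        have hGt1 : G (t+1) = Real.exp ((κ-1)/(b+1) * ((u+1)^(b+1) - 1)) := by
          rw [hGdef, hu]; push_cast; ring_nf
        have hprod : (1 + (κ-1) * u ^ b) * G t ≤ G (t+1) := by
          rw [hGt, hGt1]
          exact myprod κ b hκ1 hb1 hb0 hu1
        have hprod' : C0 * (a 1 + K) * ((1 + (κ-1) * u ^ b) * G t) ≤
            C0 * (a 1 + K) * G (t+1) := by
          apply mul_le_mul_of_nonneg_left hprod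
          have := ha 1
          positivity
        -- tail part
        have htail := mystep κ b θ C0 hκ0 hκ1 hb1 hb0 hθ hC0ge hu2 huα hup
        have hut : u - 1 = (t:ℝ) := by rw [hu]; ring
        rw [hut] at htail
        push_cast
        rw [← hu]
        nlinarith [htail, hprod', hstep1, hrec']
  -- final assembly
  intro t ht
  have hmain := hclaim t ht
  have hGE : G t ≤ Real.exp ((1-κ)/(b+1)) * Real.exp ((κ-1)/(b+1) * (t:ℝ)^(b+1)) := by
    rw [← Real.exp_add]
    apply Real.exp_le_exp.2
    have h1 : (t:ℝ)^(b+1) ≤ ((t:ℝ)+1)^(b+1) :=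
      Real.rpow_le_rpow (by positivity) (by linarith) hp0.le
    have h2 : (κ-1)/(b+1) * (((t:ℝ)+1)^(b+1) - 1) ≤ (κ-1)/(b+1) * ((t:ℝ)^(b+1) - 1) := by
      apply mul_le_mul_of_nonpos_left _ hc0.le
      linarith
    have h3 : (κ-1)/(b+1) * ((t:ℝ)^(b+1) - 1) =
        (1-κ)/(b+1) + (κ-1)/(b+1) * (t:ℝ)^(b+1) := by ring
    linarith [h2, h3]
  have hE1 : (1:ℝ) ≤ Real.exp ((1-κ)/(b+1)) := Real.one_le_exp (by positivity)
  have ha1K : 0 ≤ a 1 + K := by linarith [ha 1]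
  have htb : (0:ℝ) ≤ (t:ℝ)^(θ-b) := Real.rpow_nonneg (by positivity) _
  have hterm1 : C0 * ((a 1 + K) * G t) ≤
      C0 * Real.exp ((1-κ)/(b+1)) * ((a 1 + K) * Real.exp ((κ-1)/(b+1) * (t:ℝ)^(b+1))) := by
    have h2 := mul_le_mul_of_nonneg_left hGE ha1K
    have h3 := mul_le_mul_of_nonneg_left h2 hC0pos.le
    linarith
  have hterm2 : C0 * (t:ℝ)^(θ-b) ≤ C0 * Real.exp ((1-κ)/(b+1)) * (t:ℝ)^(θ-b) := by
    linarith [mul_le_mul_of_nonneg_right (mul_le_mul_of_nonneg_left hE1 hC0pos.le) htb]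
  have hsplit : C0 * ((a 1 + K) * G t + (t:ℝ)^(θ-b)) =
      C0 * ((a 1 + K) * G t) + C0 * (t:ℝ)^(θ-b) := by ring
  have hsplit2 : C0 * Real.exp ((1-κ)/(b+1)) *
        ((a 1 + K) * Real.exp ((κ-1)/(b+1) * (t:ℝ)^(b+1)) + (t:ℝ)^(θ-b)) =
      C0 * Real.exp ((1-κ)/(b+1)) * ((a 1 + K) * Real.exp ((κ-1)/(b+1) * (t:ℝ)^(b+1)))
        + C0 * Real.exp ((1-κ)/(b+1)) * (t:ℝ)^(θ-b) := by ring
  rw [hsplit2]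
  rw [hsplit] at hmain
  exact hmain.trans (add_le_add hterm1 hterm2)
end

section
/- Let 0 < κ < 1, let (η_j)_{j≥1} be real numbers with 0 < η_j < 1 for all j, and let m < t be nonnegative integers with m + 1 ≤ t − 1. Then Σ_{i=m+1}^{t−1} η_i · Π_{j=i+1}^{t} (1 − (1−κ)·η_j) ≤ 1/(1−κ). -/
/-!
Put `x j = (1 - κ) η j` and `Q i = ∏_{j=i}^{t} (1 - x j)`. Then `x i · Q (i+1) = Q (i+1) - Q i`,
so the sum multiplied by `1 - κ` telescopes to `Q t - Q (m+1) = (1 - x t) - Q (m+1)`, which is at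
most `1` because all factors `1 - x j` lie in `[0, 1]`.
-/

open Finset

section OneSubProd

variable {R : Type*}

theorem mul_prod_Icc_succ_one_sub [CommRing R] (x : ℕ → R) {i t : ℕ} (hit : i ≤ t) :
    x i * ∏ j ∈ Icc (i + 1) t, (1 - x j) =
      ∏ j ∈ Icc (i + 1) t, (1 - x j) - ∏ j ∈ Icc i t, (1 - x j) := by
  rw [← insert_Icc_add_one_left_eq_Icc hit, prod_insert (by simp)]
  ring

theorem sum_Ico_mul_prod_Icc_one_sub [CommRing R] (x : ℕ → R) {a t : ℕ} (hat : a ≤ t) :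
    ∑ i ∈ Ico a t, x i * ∏ j ∈ Icc (i + 1) t, (1 - x j) =
      (1 - x t) - ∏ j ∈ Icc a t, (1 - x j) := by
  rw [sum_congr rfl fun i hi => mul_prod_Icc_succ_one_sub x (mem_Ico.mp hi).2.le,
    sum_Ico_sub (fun i => ∏ j ∈ Icc i t, (1 - x j)) hat, Icc_self, prod_singleton]

theorem sum_Ico_mul_prod_Icc_one_sub_le_one [CommRing R] [LinearOrder R] [IsOrderedRing R]
    (x : ℕ → R) (hx0 : ∀ j, 0 ≤ x j) (hx1 : ∀ j, x j ≤ 1) (a t : ℕ) :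
    ∑ i ∈ Ico a t, x i * ∏ j ∈ Icc (i + 1) t, (1 - x j) ≤ 1 := by
  rcases le_or_gt a t with hat | hta
  · rw [sum_Ico_mul_prod_Icc_one_sub x hat]
    have hQ : 0 ≤ ∏ j ∈ Icc a t, (1 - x j) := prod_nonneg fun j _ => sub_nonneg.mpr (hx1 j)
    exact (sub_le_self _ hQ).trans (sub_le_self _ (hx0 t))
  · simp [Ico_eq_empty_of_le hta.le]

end OneSubProd

theorem stmt12_general (κ : ℝ) (hκ0 : 0 < κ) (hκ1 : κ < 1)
    (η : ℕ → ℝ) (hη : ∀ j, 0 < η j ∧ η j < 1)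
    (m t : ℕ) :
    ∑ i ∈ Finset.Icc (m + 1) (t - 1),
        η i * ∏ j ∈ Finset.Icc (i + 1) t, (1 - (1 - κ) * η j) ≤ 1 / (1 - κ) := by
  have hc : 0 < 1 - κ := sub_pos.mpr hκ1
  have hIcc : Icc (m + 1) (t - 1) = Ico (m + 1) t := by
    ext i; simp only [mem_Icc, mem_Ico]; omega
  have hbound := sum_Ico_mul_prod_Icc_one_sub_le_one (fun j => (1 - κ) * η j)
    (fun j => (mul_pos hc (hη j).1).le)
    (fun j => mul_le_one₀ (sub_le_self 1 hκ0.le) (hη j).1.le (hη j).2.le) (m + 1) t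
  simp only [mul_assoc, ← mul_sum] at hbound
  rw [hIcc, le_div_iff₀ hc, mul_comm]
  exact hbound

/-- for `0 < κ < 1`, learning rates `0 < η_j < 1`, and nonnegative integers
`m < t` with `m + 1 ≤ t − 1`,
`Σ_{i=m+1}^{t−1} η_i · Π_{j=i+1}^{t} (1 − (1−κ)·η_j) ≤ 1/(1−κ)`. -/
theorem stmt12 (κ : ℝ) (hκ0 : 0 < κ) (hκ1 : κ < 1)
    (η : ℕ → ℝ) (hη : ∀ j, 0 < η j ∧ η j < 1)
    (m t : ℕ) (hmt : m < t) (hmt' : m + 1 ≤ t - 1) :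
    ∑ i ∈ Finset.Icc (m + 1) (t - 1),
        η i * ∏ j ∈ Finset.Icc (i + 1) t, (1 - (1 - κ) * η j) ≤ 1 / (1 - κ) :=
  stmt12_general κ hκ0 hκ1 η hη m t
end

section
/- Let a > 0 and b < 0 with a − b > 1, let ζ > 0, and set λ := (a−b)/ζ. Define m_t := t^λ, b_t := t^{2a}, and n_t := Σ_{i=1}^{t} b_i. Then the total compressed online Sinkhorn cost Ĉ(T) := Σ_{t=1}^{T} ( m_t³ + (m_{t−1} + b_{t−1})·m_t + b_t·m_t ) satisfies Ĉ(T) = O(T^{2a+λ+1}) if ζ ≥ (a−b)/a, and Ĉ(T) = O(T^{3λ+1}) if ζ < (a−b)/a; consequently, writing δ := T^{−a}, one has Ĉ(T) = O(δ^{−(2 + (a−b)/(aζ) + 1/a)}) if ζ ≥ (a−b)/a and Ĉ(T) = O(δ^{−(3(a−b)/(aζ) + 1/a)}) if ζ < (a−b)/a, while the uncompressed online Sinkhorn cost C(T) := Σ_{t=1}^{T} n_t·b_t satisfies C(T) = O(T^{4a+2}) = O(δ^{−(4+2/a)}). -/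
open Filter Asymptotics

/-- Compression size `m_t = t^λ`. -/
noncomputable def mSize (lam : ℝ) (t : ℕ) : ℝ := (t : ℝ) ^ lam

/-- Batch size `b_t = t^{2a}`. -/
noncomputable def batchSize (a : ℝ) (t : ℕ) : ℝ := (t : ℝ) ^ (2 * a)

/-- Total sample size `n_t = Σ_{i=1}^t b_i`. -/
noncomputable def sampleSize (a : ℝ) (t : ℕ) : ℝ := ∑ i ∈ Finset.Icc 1 t, batchSize a i

/-- Total cost of compressed online Sinkhorn:
`Ĉ(T) = Σ_{t=1}^{T} ( m_t³ + (m_{t−1} + b_{t−1})·m_t + b_t·m_t )`. -/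
noncomputable def compressedCost (a lam : ℝ) (T : ℕ) : ℝ :=
  ∑ t ∈ Finset.Icc 1 T,
    (mSize lam t ^ 3 + (mSize lam (t - 1) + batchSize a (t - 1)) * mSize lam t
      + batchSize a t * mSize lam t)

/-- Total cost of (uncompressed) online Sinkhorn: `C(T) = Σ_{t=1}^{T} n_t·b_t`. -/
noncomputable def uncompressedCost (a : ℝ) (T : ℕ) : ℝ :=
  ∑ t ∈ Finset.Icc 1 T, sampleSize a t * batchSize a t


lemma pow_le_TP {T t : ℕ} (hT : 1 ≤ T) (ht1 : 1 ≤ t) (htT : t ≤ T) {e P : ℝ}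
    (he : 0 ≤ e) (heP : e ≤ P) : (t : ℝ) ^ e ≤ (T : ℝ) ^ P := by
  calc (t : ℝ) ^ e ≤ (T : ℝ) ^ e :=
        Real.rpow_le_rpow (by positivity) (by exact_mod_cast htT) he
    _ ≤ (T : ℝ) ^ P := Real.rpow_le_rpow_of_exponent_le (by exact_mod_cast hT) heP

lemma compressed_bound (a lam P : ℝ) (ha : 0 ≤ a) (hlam : 0 ≤ lam)
    (h1 : 3 * lam ≤ P) (h2 : lam + lam ≤ P) (h3 : 2 * a + lam ≤ P) :
    compressedCost a lam =O[atTop] fun T : ℕ => (T : ℝ) ^ (P + 1) := by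
  have hP : 0 ≤ P := le_trans (by linarith) h3
  rw [isBigO_iff]
  refine ⟨4, Filter.eventually_atTop.2 ⟨1, fun T hT => ?_⟩⟩
  have hT1 : (1 : ℝ) ≤ (T : ℝ) := by exact_mod_cast hT
  have hnorm2 : ‖(T : ℝ) ^ (P + 1)‖ = (T : ℝ) ^ (P + 1) := by
    rw [Real.norm_eq_abs, abs_of_nonneg (Real.rpow_nonneg (by positivity) _)]
  rw [hnorm2]
  have hbound : ∀ t ∈ Finset.Icc 1 T,
      mSize lam t ^ 3 + (mSize lam (t - 1) + batchSize a (t - 1)) * mSize lam t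
        + batchSize a t * mSize lam t ≤ 4 * (T : ℝ) ^ P := by
    intro t ht
    simp only [Finset.mem_Icc] at ht
    obtain ⟨ht1, htT⟩ := ht
    have hx1 : (1 : ℝ) ≤ (t : ℝ) := by exact_mod_cast ht1
    have hx0 : (0 : ℝ) < (t : ℝ) := by linarith
    have hs : ((t - 1 : ℕ) : ℝ) ≤ (t : ℝ) := by exact_mod_cast Nat.sub_le t 1
    have hA : mSize lam t ^ 3 ≤ (T : ℝ) ^ P := by
      have : mSize lam t ^ 3 = (t : ℝ) ^ (3 * lam) := by
        rw [mSize, ← Real.rpow_natCast ((t:ℝ) ^ lam) 3, ← Real.rpow_mul (le_of_lt hx0)]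
        norm_num; ring_nf
      rw [this]; exact pow_le_TP hT ht1 htT (by positivity) h1
    have hmm : mSize lam (t-1) * mSize lam t ≤ (T : ℝ) ^ P := by
      have h1' : mSize lam (t-1) ≤ mSize lam t :=
        Real.rpow_le_rpow (by positivity) hs hlam
      have h2' : mSize lam t * mSize lam t = (t : ℝ) ^ (lam + lam) := by
        rw [mSize, Real.rpow_add hx0]
      calc mSize lam (t-1) * mSize lam t ≤ mSize lam t * mSize lam t :=
            mul_le_mul_of_nonneg_right h1' (Real.rpow_nonneg (by positivity) _)
        _ = (t : ℝ) ^ (lam + lam) := h2'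
        _ ≤ (T : ℝ) ^ P := pow_le_TP hT ht1 htT (by positivity) h2
    have hbm : batchSize a (t-1) * mSize lam t ≤ (T : ℝ) ^ P := by
      have h1' : batchSize a (t-1) ≤ batchSize a t :=
        Real.rpow_le_rpow (by positivity) hs (by positivity)
      calc batchSize a (t-1) * mSize lam t ≤ batchSize a t * mSize lam t :=
            mul_le_mul_of_nonneg_right h1' (Real.rpow_nonneg (by positivity) _)
        _ = (t : ℝ) ^ (2 * a + lam) := by rw [batchSize, mSize, ← Real.rpow_add hx0]
        _ ≤ (T : ℝ) ^ P := pow_le_TP hT ht1 htT (by positivity) h3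
    have hbm2 : batchSize a t * mSize lam t ≤ (T : ℝ) ^ P := by
      calc batchSize a t * mSize lam t = (t : ℝ) ^ (2 * a + lam) := by
            rw [batchSize, mSize, ← Real.rpow_add hx0]
        _ ≤ (T : ℝ) ^ P := pow_le_TP hT ht1 htT (by positivity) h3
    calc mSize lam t ^ 3 + (mSize lam (t-1) + batchSize a (t-1)) * mSize lam t
          + batchSize a t * mSize lam t
        = mSize lam t ^ 3 + mSize lam (t-1) * mSize lam t
          + batchSize a (t-1) * mSize lam t + batchSize a t * mSize lam t := by ring
      _ ≤ (T:ℝ)^P + (T:ℝ)^P + (T:ℝ)^P + (T:ℝ)^P := by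
            gcongr
      _ = 4 * (T:ℝ)^P := by ring
  have hnn : 0 ≤ compressedCost a lam T := by
    apply Finset.sum_nonneg
    intro t _
    have : (0:ℝ) ≤ mSize lam t := Real.rpow_nonneg (by positivity) _
    have : (0:ℝ) ≤ mSize lam (t-1) := Real.rpow_nonneg (by positivity) _
    have : (0:ℝ) ≤ batchSize a (t-1) := Real.rpow_nonneg (by positivity) _
    have : (0:ℝ) ≤ batchSize a t := Real.rpow_nonneg (by positivity) _
    positivity
  rw [Real.norm_eq_abs, abs_of_nonneg hnn]
  calc compressedCost a lam T ≤ ∑ _t ∈ Finset.Icc 1 T, 4 * (T : ℝ) ^ P :=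
        Finset.sum_le_sum hbound
    _ = T • (4 * (T:ℝ)^P) := by rw [Finset.sum_const, Nat.card_Icc]; simp
    _ = 4 * ((T:ℝ) * (T:ℝ)^P) := by rw [nsmul_eq_mul]; ring
    _ = 4 * (T:ℝ)^(P+1) := by
        rw [Real.rpow_add (by linarith : (0:ℝ) < T), Real.rpow_one]; ring

lemma delta_eq (a c : ℝ) :
    (fun T : ℕ => ((T : ℝ) ^ (-a)) ^ (-c)) = fun T : ℕ => (T : ℝ) ^ (a * c) := by
  funext T
  rw [← Real.rpow_mul (Nat.cast_nonneg T)]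
  ring_nf

lemma uncompressed_bound (a : ℝ) (ha : 0 ≤ a) :
    uncompressedCost a =O[atTop] fun T : ℕ => (T : ℝ) ^ (4 * a + 2) := by
  rw [isBigO_iff]
  refine ⟨1, Filter.eventually_atTop.2 ⟨1, fun T hT => ?_⟩⟩
  have hT1 : (1 : ℝ) ≤ (T : ℝ) := by exact_mod_cast hT
  have hT0 : (0 : ℝ) < (T : ℝ) := by linarith
  have hbound : ∀ t ∈ Finset.Icc 1 T,
      sampleSize a t * batchSize a t ≤ (T : ℝ) ^ (4 * a + 1) := by
    intro t ht
    simp only [Finset.mem_Icc] at ht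
    obtain ⟨ht1, htT⟩ := ht
    have hx1 : (1 : ℝ) ≤ (t : ℝ) := by exact_mod_cast ht1
    have hx0 : (0 : ℝ) < (t : ℝ) := by linarith
    have hsamp : sampleSize a t ≤ (T : ℝ) ^ (2 * a + 1) := by
      have hb : ∀ i ∈ Finset.Icc 1 t, batchSize a i ≤ (T : ℝ) ^ (2 * a) := by
        intro i hi
        simp only [Finset.mem_Icc] at hi
        exact pow_le_TP hT hi.1 (hi.2.trans htT) (by positivity) le_rfl
      calc sampleSize a t ≤ ∑ _i ∈ Finset.Icc 1 t, (T : ℝ) ^ (2 * a) :=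
            Finset.sum_le_sum hb
        _ = t • ((T : ℝ) ^ (2 * a)) := by rw [Finset.sum_const, Nat.card_Icc]; simp
        _ = (t : ℝ) * (T : ℝ) ^ (2 * a) := by rw [nsmul_eq_mul]
        _ ≤ (T : ℝ) * (T : ℝ) ^ (2 * a) := by
            apply mul_le_mul_of_nonneg_right (by exact_mod_cast htT)
            positivity
        _ = (T : ℝ) ^ (2 * a + 1) := by
            rw [Real.rpow_add hT0, Real.rpow_one]; ring
    have hbatch : batchSize a t ≤ (T : ℝ) ^ (2 * a) :=
      pow_le_TP hT ht1 htT (by positivity) le_rfl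
    have hsampnn : 0 ≤ sampleSize a t :=
      Finset.sum_nonneg fun i _ => Real.rpow_nonneg (by positivity) _
    calc sampleSize a t * batchSize a t
        ≤ (T : ℝ) ^ (2 * a + 1) * (T : ℝ) ^ (2 * a) := by
          apply mul_le_mul hsamp hbatch (Real.rpow_nonneg (by positivity) _)
          positivity
      _ = (T : ℝ) ^ (4 * a + 1) := by rw [← Real.rpow_add hT0]; ring_nf
  have hnn : 0 ≤ uncompressedCost a T := by
    apply Finset.sum_nonneg
    intro t _
    have h1 : 0 ≤ sampleSize a t :=
      Finset.sum_nonneg fun i _ => Real.rpow_nonneg (by positivity) _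
    have h2 : 0 ≤ batchSize a t := Real.rpow_nonneg (by positivity) _
    positivity
  rw [Real.norm_eq_abs, abs_of_nonneg hnn, Real.norm_eq_abs,
    abs_of_nonneg (Real.rpow_nonneg (by positivity) _), one_mul]
  calc uncompressedCost a T ≤ ∑ _t ∈ Finset.Icc 1 T, (T : ℝ) ^ (4 * a + 1) :=
        Finset.sum_le_sum hbound
    _ = (T : ℝ) * (T : ℝ) ^ (4 * a + 1) := by
        rw [Finset.sum_const, Nat.card_Icc, nsmul_eq_mul]; simp
    _ = (T : ℝ) ^ (4 * a + 2) := by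
        rw [Real.rpow_add hT0, Real.rpow_add hT0]
        rw [Real.rpow_one]
        ring_nf
        rw [Real.rpow_two]
        ring

/-- complexity of compressed vs. uncompressed online Sinkhorn. With
`λ = (a−b)/ζ`, `δ = T^{−a}`: if `ζ ≥ (a−b)/a` then `Ĉ(T) = O(T^{2a+λ+1}) = O(δ^{−(2+(a−b)/(aζ)+1/a)})`,
if `ζ < (a−b)/a` then `Ĉ(T) = O(T^{3λ+1}) = O(δ^{−(3(a−b)/(aζ)+1/a)})`, and in all cases
`C(T) = O(T^{4a+2}) = O(δ^{−(4+2/a)})`. -/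
theorem stmt13 (a b ζ : ℝ) (ha : 0 < a) (hb : b < 0) (hab : 1 < a - b) (hζ : 0 < ζ) :
    ((a - b) / a ≤ ζ →
      (compressedCost a ((a - b) / ζ)) =O[atTop]
          (fun T : ℕ => (T : ℝ) ^ (2 * a + (a - b) / ζ + 1)) ∧
      (compressedCost a ((a - b) / ζ)) =O[atTop]
          (fun T : ℕ => ((T : ℝ) ^ (-a)) ^ (-(2 + (a - b) / (a * ζ) + 1 / a)))) ∧
    (ζ < (a - b) / a →
      (compressedCost a ((a - b) / ζ)) =O[atTop]
          (fun T : ℕ => (T : ℝ) ^ (3 * ((a - b) / ζ) + 1)) ∧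
      (compressedCost a ((a - b) / ζ)) =O[atTop]
          (fun T : ℕ => ((T : ℝ) ^ (-a)) ^ (-(3 * (a - b) / (a * ζ) + 1 / a)))) ∧
    (uncompressedCost a) =O[atTop] (fun T : ℕ => (T : ℝ) ^ (4 * a + 2)) ∧
    (uncompressedCost a) =O[atTop]
        (fun T : ℕ => ((T : ℝ) ^ (-a)) ^ (-(4 + 2 / a))) := by
  set lam := (a - b) / ζ with hlamdef
  have hab0 : 0 < a - b := by linarith
  have hlam0 : 0 < lam := div_pos hab0 hζ
  refine ⟨?_, ?_, ?_, ?_⟩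
  · intro hc
    have hlama : lam ≤ a := by
      rw [hlamdef, div_le_iff₀ hζ]
      rw [div_le_iff₀ ha] at hc
      linarith
    have h := compressed_bound a lam (2 * a + lam) ha.le hlam0.le
      (by linarith) (by linarith) le_rfl
    refine ⟨h, ?_⟩
    rw [delta_eq]
    rw [show a * (2 + (a - b) / (a * ζ) + 1 / a) = 2 * a + lam + 1 by
      rw [hlamdef]; field_simp]
    exact h
  · intro hc
    have hlama : a < lam := by
      rw [hlamdef, lt_div_iff₀ hζ]
      have h' := (lt_div_iff₀ ha).mp hc
      nlinarith
    have h := compressed_bound a lam (3 * lam) ha.le hlam0.le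
      le_rfl (by linarith) (by linarith)
    constructor
    · exact h
    · rw [delta_eq]
      rw [show a * (3 * (a - b) / (a * ζ) + 1 / a) = 3 * lam + 1 by
        rw [hlamdef]; field_simp]
      exact h
  · exact uncompressed_bound a ha.le
  · rw [delta_eq]
    rw [show a * (4 + 2 / a) = 4 * a + 2 by field_simp]
    exact uncompressed_bound a ha.le
end
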